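/- Let S be a finite nonempty set of points in ℝ^m, p ∈ ℝ^m, and suppose p' ∈ conv(S) is a witness, i.e., d(p', v) < d(p, v) for all v ∈ S. Then d(p', x) < d(p, x) for every x ∈ conv(S); in particular, p ∉ conv(S). -/

import Mathlib

/-!
Expanding squares, `dist a x < dist b x` is the strict linear inequality
`⟪b - a, x⟫ < (‖b‖² - ‖a‖²) / 2`, so the points strictly closer to `a` than to `b` form an open
half-space. Being convex, it contains the convex hull of `S` as soon as it contains `S`.
Taking `x = p` would give `dist p' p < 0`, so `p` lies outside the hull.
-/

open RealInnerProductSpace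

section

variable {E : Type*} [NormedAddCommGroup E] [InnerProductSpace ℝ E]

theorem dist_lt_dist_iff_inner_lt (a b x : E) :
    dist a x < dist b x ↔ ⟪b - a, x⟫ < (‖b‖ ^ 2 - ‖a‖ ^ 2) / 2 := by
  rw [← sq_lt_sq₀ dist_nonneg dist_nonneg, dist_eq_norm, dist_eq_norm, norm_sub_sq_real,
    norm_sub_sq_real, inner_sub_left]
  constructor <;> intro h <;> linarith

theorem convex_setOf_dist_lt_dist (a b : E) : Convex ℝ {x | dist a x < dist b x} := by
  simp_rw [dist_lt_dist_iff_inner_lt]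
  exact convex_halfSpace_lt (innerₛₗ ℝ (b - a)).isLinear _

end

theorem witness_separates_general {m : ℕ} (S : Finset (EuclideanSpace ℝ (Fin m)))
    (p p' : EuclideanSpace ℝ (Fin m))
    (hwit : ∀ v ∈ S, dist p' v < dist p v) :
    (∀ x ∈ convexHull ℝ (S : Set (EuclideanSpace ℝ (Fin m))), dist p' x < dist p x) ∧
      p ∉ convexHull ℝ (S : Set (EuclideanSpace ℝ (Fin m))) := by
  have hsep : ∀ x ∈ convexHull ℝ (S : Set (EuclideanSpace ℝ (Fin m))), dist p' x < dist p x :=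
    fun x hx => convexHull_min hwit (convex_setOf_dist_lt_dist p' p) hx
  refine ⟨hsep, fun hp => ?_⟩
  simpa using (hsep p hp).trans_le' dist_nonneg

/-- If `p' ∈ conv(S)` is a witness (`d(p', v) < d(p, v)` for all `v ∈ S`), then
`d(p', x) < d(p, x)` for every `x ∈ conv(S)`; in particular `p ∉ conv(S)`. -/
theorem witness_separates {m : ℕ} (S : Finset (EuclideanSpace ℝ (Fin m)))
    (hS : S.Nonempty) (p p' : EuclideanSpace ℝ (Fin m))
    (hp' : p' ∈ convexHull ℝ (S : Set (EuclideanSpace ℝ (Fin m))))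
    (hwit : ∀ v ∈ S, dist p' v < dist p v) :
    (∀ x ∈ convexHull ℝ (S : Set (EuclideanSpace ℝ (Fin m))), dist p' x < dist p x) ∧
      p ∉ convexHull ℝ (S : Set (EuclideanSpace ℝ (Fin m))) :=
  witness_separates_general S p p' hwit
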